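/- arXiv:2201.09562 — 7 statements merged into one kernel-verified Lean document; each statement's English description precedes it below -/
import Mathlib

section
/- Let k₋ ≤ k₊ be natural numbers. Suppose that for every integer k with k₋ ≤ k ≤ k₊ there exists a_s ∈ A such that g_i(a_s, x(k·Δt)) ≥ L_x · Ξ for all i ∈ I. Then ḡ_i(x(t)) ≥ 0 for every t ∈ [k₋·Δt, (k₊+1)·Δt] and every i ∈ I. -/
/-- If at every sampling step `k` with `k₋ ≤ k ≤ k₊` some parameter `a ∈ A`
satisfies `g i a (x (k·Δt)) ≥ Lx · Ξ` for all constraints `i ∈ I`, then the state constraints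
`ḡ i (x t) ≥ 0` hold for every `t ∈ [k₋·Δt, (k₊+1)·Δt]`. -/
theorem stmt0
    {X α ι : Type*} [NormedAddCommGroup X] [NormedSpace ℝ X]
    (A : Set α) (hA : A.Nonempty)
    (I : Finset ι) (hI : I.Nonempty)
    (gbar : ι → X → ℝ) (g : ι → α → X → ℝ)
    (Lx : ℝ) (hLx : 0 ≤ Lx)
    (hle : ∀ i ∈ I, ∀ a ∈ A, ∀ x : X, g i a x ≤ gbar i x)
    (hLip : ∀ i ∈ I, ∀ a ∈ A, ∀ x y : X, |g i a x - g i a y| ≤ Lx * ‖x - y‖)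
    (Δt : ℝ) (hΔt : 0 < Δt)
    (Ξ : ℝ) (hΞ : 0 ≤ Ξ)
    (x : ℝ → X)
    (hjump : ∀ (k : ℕ) (t : ℝ), (k : ℝ) * Δt ≤ t → t ≤ ((k : ℝ) + 1) * Δt →
      ‖x t - x ((k : ℝ) * Δt)‖ ≤ Ξ)
    (kminus kplus : ℕ) (hk : kminus ≤ kplus)
    (hsafe : ∀ k : ℕ, kminus ≤ k → k ≤ kplus →
      ∃ a ∈ A, ∀ i ∈ I, g i a (x ((k : ℝ) * Δt)) ≥ Lx * Ξ) :
    ∀ t : ℝ, (kminus : ℝ) * Δt ≤ t → t ≤ ((kplus : ℝ) + 1) * Δt →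
      ∀ i ∈ I, gbar i (x t) ≥ 0 := by
  intro t ht1 ht2 i hi
  have ht0 : 0 ≤ t := le_trans (by positivity) ht1
  have hq0 : 0 ≤ t / Δt := div_nonneg ht0 hΔt.le
  set k : ℕ := min (⌊t / Δt⌋.toNat) kplus with hkdef
  have hfloor : (kminus : ℤ) ≤ ⌊t / Δt⌋ := by
    apply Int.le_floor.2
    push_cast
    rw [le_div_iff₀ hΔt]
    linarith
  have hkmin : kminus ≤ k := by
    refine le_min ?_ hk
    have := Int.toNat_le_toNat hfloor
    simpa using this
  have hkmax : k ≤ kplus := min_le_right _ _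
  have hkl : (k : ℝ) * Δt ≤ t := by
    have hkle : (k : ℝ) ≤ t / Δt := by
      have h1 : ((⌊t / Δt⌋.toNat : ℤ) : ℝ) ≤ t / Δt := by
        rw [Int.toNat_of_nonneg (Int.floor_nonneg.2 hq0)]
        exact Int.floor_le _
      have h2 : (k : ℝ) ≤ (⌊t / Δt⌋.toNat : ℝ) := by
        exact_mod_cast min_le_left _ _
      calc (k : ℝ) ≤ _ := h2
        _ ≤ t / Δt := by exact_mod_cast h1
    calc (k : ℝ) * Δt ≤ (t / Δt) * Δt := by nlinarith
      _ = t := div_mul_cancel₀ t hΔt.ne'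
  have hkr : t ≤ ((k : ℝ) + 1) * Δt := by
    rcases le_or_gt (⌊t / Δt⌋.toNat) kplus with h | h
    · have hk' : k = ⌊t / Δt⌋.toNat := min_eq_left h
      have : t / Δt < (⌊t / Δt⌋ : ℝ) + 1 := Int.lt_floor_add_one _
      have hcast : ((⌊t / Δt⌋.toNat : ℤ) : ℝ) = (⌊t / Δt⌋ : ℝ) := by
        rw [Int.toNat_of_nonneg (Int.floor_nonneg.2 hq0)]
      have : t / Δt < (k : ℝ) + 1 := by
        rw [hk']
        push_cast [← hcast] at this ⊢
        exact_mod_cast this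
      calc t = (t / Δt) * Δt := (div_mul_cancel₀ t hΔt.ne').symm
        _ ≤ ((k : ℝ) + 1) * Δt := by nlinarith
    · have hk' : k = kplus := min_eq_right h.le
      rw [hk']; exact ht2
  obtain ⟨a, ha, hga⟩ := hsafe k hkmin hkmax
  have hjmp := hjump k t hkl hkr
  have hlip := hLip i hi a ha (x t) (x ((k : ℝ) * Δt))
  have h1 : g i a (x ((k : ℝ) * Δt)) - g i a (x t) ≤ Lx * Ξ := by
    have := abs_le.1 hlip
    have h2 : Lx * ‖x t - x ((k : ℝ) * Δt)‖ ≤ Lx * Ξ :=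
      mul_le_mul_of_nonneg_left hjmp hLx
    linarith [this.1, this.2]
  have := hga i hi
  have := hle i hi a ha (x t)
  linarith
end

section
/- Suppose k* ≥ 1 is a natural number and for every natural number k < k* there exists (a_s, x_s) ∈ B such that l(a_s, i) ≥ L_x · (‖x(k·Δt) − x_s‖ + Ξ) for all i ∈ I. Then ḡ_i(x(t)) ≥ 0 for all t ∈ [0, k*·Δt] and all i ∈ I; that is, if the boundary condition does not trigger a backup policy before time step k*, the experiment is safe up to time k*·Δt. -/
/-- If for every time step `k < k*` the boundary condition does not trigger,
i.e. there is a backup `(a_s, x_s) ∈ B` with `l a_s i ≥ Lx · (‖x(k·Δt) − x_s‖ + Ξ)` for all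
`i ∈ I`, then the experiment is safe up to time `k*·Δt`: `ḡ i (x t) ≥ 0` for all
`t ∈ [0, k*·Δt]` and `i ∈ I`. -/
theorem stmt3
    {X α ι : Type*} [NormedAddCommGroup X] [NormedSpace ℝ X]
    (A : Set α) (hA : A.Nonempty)
    (I : Finset ι) (hI : I.Nonempty)
    (gbar : ι → X → ℝ) (g : ι → α → X → ℝ)
    (Lx : ℝ) (hLx : 0 ≤ Lx)
    (hle : ∀ i ∈ I, ∀ a ∈ A, ∀ x : X, g i a x ≤ gbar i x)
    (hLip : ∀ i ∈ I, ∀ a ∈ A, ∀ x y : X, |g i a x - g i a y| ≤ Lx * ‖x - y‖)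
    (Δt : ℝ) (hΔt : 0 < Δt)
    (Ξ : ℝ) (hΞ : 0 ≤ Ξ)
    (x : ℝ → X)
    (hjump : ∀ (k : ℕ) (t : ℝ), (k : ℝ) * Δt ≤ t → t ≤ ((k : ℝ) + 1) * Δt →
      ‖x t - x ((k : ℝ) * Δt)‖ ≤ Ξ)
    (B : Set (α × X)) (hB : ∀ p ∈ B, p.1 ∈ A)
    (l : α → ι → ℝ)
    (hl : ∀ p ∈ B, ∀ i ∈ I, l p.1 i ≤ g i p.1 p.2)
    (kstar : ℕ) (hkstar : 1 ≤ kstar)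
    (hnotrigger : ∀ k : ℕ, k < kstar →
      ∃ p ∈ B, ∀ i ∈ I, l p.1 i ≥ Lx * (‖x ((k : ℝ) * Δt) - p.2‖ + Ξ)) :
    ∀ t : ℝ, 0 ≤ t → t ≤ (kstar : ℝ) * Δt → ∀ i ∈ I, gbar i (x t) ≥ 0 := by

  intro t ht htle i hi
  set k : ℕ := min (Nat.floor (t / Δt)) (kstar - 1) with hkdef
  have hkls : k < kstar := lt_of_le_of_lt (min_le_right _ _) (by omega)
  have hdiv : 0 ≤ t / Δt := div_nonneg ht hΔt.le
  have hfloor_le : (Nat.floor (t/Δt) : ℝ) ≤ t / Δt := Nat.floor_le hdiv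
  have hlt_floor : t / Δt < Nat.floor (t/Δt) + 1 := Nat.lt_floor_add_one _
  have hk1 : (k : ℝ) * Δt ≤ t := by
    rcases le_or_gt (Nat.floor (t/Δt)) (kstar - 1) with h | h
    · have hk' : k = Nat.floor (t/Δt) := min_eq_left h
      rw [hk']
      calc (Nat.floor (t/Δt) : ℝ) * Δt ≤ (t/Δt) * Δt := by nlinarith
        _ = t := div_mul_cancel₀ t hΔt.ne'
    · have hk' : k = kstar - 1 := min_eq_right h.le
      have hge : (kstar : ℝ) ≤ t / Δt := by
        have h2 : kstar ≤ Nat.floor (t/Δt) := by omega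
        have : (kstar : ℝ) ≤ (Nat.floor (t/Δt) : ℝ) := by exact_mod_cast h2
        linarith
      have ht' : (kstar : ℝ) * Δt ≤ t := by
        calc (kstar : ℝ) * Δt ≤ (t/Δt) * Δt := by nlinarith
          _ = t := div_mul_cancel₀ t hΔt.ne'
      have hc : ((kstar - 1 : ℕ) : ℝ) ≤ (kstar : ℝ) := by exact_mod_cast Nat.sub_le _ _
      rw [hk']
      nlinarith
  have hk2 : t ≤ ((k : ℝ) + 1) * Δt := by
    rcases le_or_gt (Nat.floor (t/Δt)) (kstar - 1) with h | h
    · have hk' : k = Nat.floor (t/Δt) := min_eq_left h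
      rw [hk']
      have : t / Δt * Δt = t := div_mul_cancel₀ t hΔt.ne'
      nlinarith
    · have hk' : k = kstar - 1 := min_eq_right h.le
      have hc : ((kstar - 1 : ℕ) : ℝ) + 1 = (kstar : ℝ) := by
        have : kstar - 1 + 1 = kstar := by omega
        exact_mod_cast congrArg (Nat.cast : ℕ → ℝ) this
      rw [hk', hc]; exact htle
  obtain ⟨p, hpB, hptrig⟩ := hnotrigger k hkls
  have hpA := hB p hpB
  have hΞt := hjump k t hk1 hk2
  have hlip := hLip i hi p.1 hpA p.2 (x t)
  have hle' := hle i hi p.1 hpA (x t)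
  have hl' := hl p hpB i hi
  have htrig := hptrig i hi
  have htri : ‖x t - p.2‖ ≤ ‖x ((k : ℝ)*Δt) - p.2‖ + Ξ := by
    calc ‖x t - p.2‖ ≤ ‖x t - x ((k : ℝ)*Δt)‖ + ‖x ((k : ℝ)*Δt) - p.2‖ :=
          norm_sub_le_norm_sub_add_norm_sub _ _ _
      _ ≤ ‖x ((k : ℝ)*Δt) - p.2‖ + Ξ := by linarith
  have habs : g i p.1 p.2 - g i p.1 (x t) ≤ Lx * ‖x t - p.2‖ := by
    have := abs_le.mp hlip
    rw [norm_sub_rev] at this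
    linarith [this.2]
  have hmul : Lx * ‖x t - p.2‖ ≤ Lx * (‖x ((k : ℝ)*Δt) - p.2‖ + Ξ) :=
    mul_le_mul_of_nonneg_left htri hLx
  linarith
end

section
/- Suppose k* ≥ 1 is a natural number, ‖x(k*·Δt) − x((k*−1)·Δt)‖ ≤ Ξ, and there exists (a_s, x_s) ∈ B with l(a_s, i) ≥ L_x · (‖x((k*−1)·Δt) − x_s‖ + Ξ) for all i ∈ I. Then this (a_s, x_s) satisfies l(a_s, i) − L_x · ‖x_s − x(k*·Δt)‖ ≥ 0 for all i ∈ I, and consequently g_i(a_s, x(k*·Δt)) ≥ 0 for all i ∈ I; i.e. at the time step where the boundary condition triggers, there exists a backup parameter that is safe for the current state. -/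
/-- If at time step `k* ≥ 1` the state moved at most `Ξ` from the previous
sample and some backup `(a_s, x_s) ∈ B` satisfied the boundary condition margin at the
previous sample, then that backup satisfies `l a_s i − Lx·‖x_s − x(k*·Δt)‖ ≥ 0` and is safe
for the current state: `g i a_s (x(k*·Δt)) ≥ 0` for all `i ∈ I`. -/
theorem stmt4
    {X α ι : Type*} [NormedAddCommGroup X] [NormedSpace ℝ X]
    (A : Set α) (hA : A.Nonempty)
    (I : Finset ι) (hI : I.Nonempty)
    (g : ι → α → X → ℝ)
    (Lx : ℝ) (hLx : 0 ≤ Lx)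
    (hLip : ∀ i ∈ I, ∀ a : α, ∀ x y : X, |g i a x - g i a y| ≤ Lx * ‖x - y‖)
    (Δt : ℝ) (hΔt : 0 < Δt)
    (Ξ : ℝ) (hΞ : 0 ≤ Ξ)
    (x : ℝ → X)
    (B : Set (α × X))
    (l : α → ι → ℝ)
    (hl : ∀ p ∈ B, ∀ i ∈ I, l p.1 i ≤ g i p.1 p.2)
    (kstar : ℕ) (hkstar : 1 ≤ kstar)
    (hjump : ‖x ((kstar : ℝ) * Δt) - x (((kstar : ℝ) - 1) * Δt)‖ ≤ Ξ) :
    ∀ aₛ : α, ∀ xₛ : X, (aₛ, xₛ) ∈ B →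
      (∀ i ∈ I, l aₛ i ≥ Lx * (‖x (((kstar : ℝ) - 1) * Δt) - xₛ‖ + Ξ)) →
      ∀ i ∈ I, l aₛ i - Lx * ‖xₛ - x ((kstar : ℝ) * Δt)‖ ≥ 0 ∧
        g i aₛ (x ((kstar : ℝ) * Δt)) ≥ 0 := by
  intro a xs hB hmarg i hi
  have hnorm : ‖xs - x ((kstar : ℝ) * Δt)‖ ≤ ‖x (((kstar : ℝ) - 1) * Δt) - xs‖ + Ξ := by
    calc ‖xs - x ((kstar : ℝ) * Δt)‖
        ≤ ‖xs - x (((kstar : ℝ) - 1) * Δt)‖ + ‖x (((kstar : ℝ) - 1) * Δt) - x ((kstar : ℝ) * Δt)‖ :=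
          norm_sub_le_norm_sub_add_norm_sub _ _ _
      _ ≤ ‖x (((kstar : ℝ) - 1) * Δt) - xs‖ + Ξ := by
          rw [norm_sub_rev xs]
          refine add_le_add le_rfl ?_
          rw [norm_sub_rev]
          exact hjump
  have h1 : l a i - Lx * ‖xs - x ((kstar : ℝ) * Δt)‖ ≥ 0 := by
    have := hmarg i hi
    nlinarith [mul_le_mul_of_nonneg_left hnorm hLx]
  refine ⟨h1, ?_⟩
  have hg := hl (a, xs) hB i hi
  have habs := hLip i hi a xs (x ((kstar : ℝ) * Δt))
  have := abs_le.mp habs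
  simp only at hg
  linarith [this.1, this.2]
end

section
/- Suppose that for every k ∈ ℕ there exists (a_s, x_s) ∈ B such that l(a_s, i) ≥ L_x · (‖x(k·Δt) − x_s‖ + Ξ) for all i ∈ I. Then ḡ_i(x(t)) ≥ 0 for all t ≥ 0 and all i ∈ I; that is, if the boundary condition never triggers a backup policy during the experiment, then the entire experiment is safe. -/
/-- If the boundary condition never triggers a backup policy during the
experiment (at every sampling step `k` there is a backup `(a_s, x_s) ∈ B` with
`l a_s i ≥ Lx · (‖x(k·Δt) − x_s‖ + Ξ)` for all `i ∈ I`), then the entire experiment is safe: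
`ḡ i (x t) ≥ 0` for all `t ≥ 0` and all `i ∈ I`. -/
theorem stmt5
    {X α ι : Type*} [NormedAddCommGroup X] [NormedSpace ℝ X]
    (A : Set α) (hA : A.Nonempty)
    (I : Finset ι) (hI : I.Nonempty)
    (gbar : ι → X → ℝ) (g : ι → α → X → ℝ)
    (Lx : ℝ) (hLx : 0 ≤ Lx)
    (hle : ∀ i ∈ I, ∀ a ∈ A, ∀ x : X, g i a x ≤ gbar i x)
    (hLip : ∀ i ∈ I, ∀ a ∈ A, ∀ x y : X, |g i a x - g i a y| ≤ Lx * ‖x - y‖)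
    (Δt : ℝ) (hΔt : 0 < Δt)
    (Ξ : ℝ) (hΞ : 0 ≤ Ξ)
    (x : ℝ → X)
    (hjump : ∀ (k : ℕ) (t : ℝ), (k : ℝ) * Δt ≤ t → t ≤ ((k : ℝ) + 1) * Δt →
      ‖x t - x ((k : ℝ) * Δt)‖ ≤ Ξ)
    (B : Set (α × X)) (hB : ∀ p ∈ B, p.1 ∈ A)
    (l : α → ι → ℝ)
    (hl : ∀ p ∈ B, ∀ i ∈ I, l p.1 i ≤ g i p.1 p.2)
    (hnotrigger : ∀ k : ℕ,
      ∃ p ∈ B, ∀ i ∈ I, l p.1 i ≥ Lx * (‖x ((k : ℝ) * Δt) - p.2‖ + Ξ)) :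
    ∀ t : ℝ, 0 ≤ t → ∀ i ∈ I, gbar i (x t) ≥ 0 := by
  intro t ht i hi
  set k : ℕ := ⌊t / Δt⌋₊ with hk
  have hk1 : (k : ℝ) * Δt ≤ t :=
    (le_div_iff₀ hΔt).mp (Nat.floor_le (div_nonneg ht hΔt.le))
  have hk2 : t ≤ ((k : ℝ) + 1) * Δt :=
    le_of_lt ((div_lt_iff₀ hΔt).mp (Nat.lt_floor_add_one _))
  have hΞt := hjump k t hk1 hk2
  obtain ⟨p, hpB, hpl⟩ := hnotrigger k
  have hpA := hB p hpB
  have h1 : g i p.1 p.2 - g i p.1 (x t) ≤ Lx * ‖p.2 - x t‖ :=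
    le_trans (le_abs_self _) (hLip i hi p.1 hpA p.2 (x t))
  have hnorm : ‖p.2 - x t‖ ≤ ‖x ((k : ℝ) * Δt) - p.2‖ + Ξ := by
    calc ‖p.2 - x t‖ = ‖(p.2 - x ((k:ℝ)*Δt)) + (x ((k:ℝ)*Δt) - x t)‖ := by rw [sub_add_sub_cancel]
      _ ≤ ‖p.2 - x ((k:ℝ)*Δt)‖ + ‖x ((k:ℝ)*Δt) - x t‖ := norm_add_le _ _
      _ ≤ ‖x ((k:ℝ)*Δt) - p.2‖ + Ξ := by
          rw [norm_sub_rev p.2]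
          exact add_le_add le_rfl (norm_sub_rev (x ((k:ℝ)*Δt)) (x t) ▸ hΞt)
  have := hpl i hi
  have hlg := hl p hpB i hi
  have hfin : 0 ≤ g i p.1 (x t) := by
    have : Lx * ‖p.2 - x t‖ ≤ Lx * (‖x ((k:ℝ)*Δt) - p.2‖ + Ξ) :=
      mul_le_mul_of_nonneg_left hnorm hLx
    linarith
  exact le_trans hfin (hle i hi p.1 hpA (x t))
end

section
/- Let A be a metric space and I a finite index set. For each i ∈ I let g_i : A → ℝ be L_a-Lipschitz and let l : A × I → ℝ satisfy l(a, i) ≤ g_i(a) for all a ∈ A and i ∈ I. If a' ∈ A is such that for every i ∈ I there exists a_i ∈ A with l(a_i, i) − L_a · dist(a', a_i) ≥ 0, then g_i(a') ≥ 0 for all i ∈ I; that is, every parameter added to the safe set by the Lipschitz-based safe-set update is safe. -/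
/-- Every parameter added to the safe set by the Lipschitz-based safe-set update
is safe: if for each constraint `i ∈ I` some point `a_i` satisfies
`l a_i i − L_a · dist a' a_i ≥ 0`, then `g i a' ≥ 0` for all `i ∈ I`. -/
theorem stmt7
    {A ι : Type*} [MetricSpace A]
    (I : Finset ι)
    (g : ι → A → ℝ)
    (La : ℝ) (hLa : 0 ≤ La)
    (hLip : ∀ i ∈ I, ∀ a b : A, |g i a - g i b| ≤ La * dist a b)
    (l : A → ι → ℝ)
    (hl : ∀ a : A, ∀ i ∈ I, l a i ≤ g i a)
    (a' : A)
    (h : ∀ i ∈ I, ∃ aᵢ : A, l aᵢ i - La * dist a' aᵢ ≥ 0) :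
    ∀ i ∈ I, g i a' ≥ 0 := by
  intro i hi
  obtain ⟨ai, hai⟩ := h i hi
  have h1 := hl ai i hi
  have h2 := hLip i hi ai a'
  have h3 : g i ai - g i a' ≤ La * dist ai a' := (abs_le.mp h2).2
  rw [dist_comm] at h3
  linarith
end

section
/- Let A₀ ⊆ S ⊆ A. If R̄_ε(A₀) \ S ≠ ∅, then R_ε(S) \ S ≠ ∅; that is, if the fully connected safely reachable set of a subset of S contains a point outside S, then one application of the reachability operator to S already produces a point outside S. -/
/-- One-step reachability operator
`R_ε(S) = S ∪ {a | ∃ a' ∈ S, ∀ i ∈ I, g i a' − ε − L_a · dist a a' ≥ 0}`. -/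
def Rstep {A ι : Type*} [MetricSpace A] (I : Finset ι) (g : ι → A → ℝ)
    (La ε : ℝ) (S : Set A) : Set A :=
  S ∪ {a : A | ∃ a' ∈ S, ∀ i ∈ I, g i a' - ε - La * dist a a' ≥ 0}

/-- Fully connected safely reachable set `R̄_ε(S) = ⋃ n, R_ε^[n](S)`. -/
def Rbar {A ι : Type*} [MetricSpace A] (I : Finset ι) (g : ι → A → ℝ)
    (La ε : ℝ) (S : Set A) : Set A :=
  ⋃ n : ℕ, (Rstep I g La ε)^[n] S

lemma Rstep_mono {A ι : Type*} [MetricSpace A] (I : Finset ι) (g : ι → A → ℝ)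
    (La ε : ℝ) {S T : Set A} (h : S ⊆ T) : Rstep I g La ε S ⊆ Rstep I g La ε T := by
  rintro a (ha | ⟨a', ha', hg⟩)
  · exact Or.inl (h ha)
  · exact Or.inr ⟨a', h ha', hg⟩

/-- If `A₀ ⊆ S` and the fully connected safely reachable set of `A₀` contains a
point outside `S`, then one application of the reachability operator to `S` already produces
a point outside `S`. -/
theorem stmt8
    {A ι : Type*} [MetricSpace A]
    (I : Finset ι) (g : ι → A → ℝ)
    (La : ℝ) (hLa : 0 ≤ La) (ε : ℝ) (hε : 0 ≤ ε)
    (A0 S : Set A) (hsub : A0 ⊆ S)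
    (hne : (Rbar I g La ε A0 \ S).Nonempty) :
    (Rstep I g La ε S \ S).Nonempty := by
  obtain ⟨x, hx, hxS⟩ := hne
  obtain ⟨n, hn⟩ := Set.mem_iUnion.mp hx
  -- find minimal n with some point of the n-th iterate outside S
  have hP : ∃ m, ¬ (Rstep I g La ε)^[m] A0 ⊆ S := ⟨n, fun h => hxS (h hn)⟩
  clear hx hn hxS
  have key : ∀ n, ¬ (Rstep I g La ε)^[n] A0 ⊆ S →
      (Rstep I g La ε S \ S).Nonempty := by
    intro n
    induction n with
    | zero => intro h; exact absurd hsub h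
    | succ k ih =>
      intro h
      by_cases hk : (Rstep I g La ε)^[k] A0 ⊆ S
      · obtain ⟨y, hy, hyS⟩ := Set.not_subset.mp h
        rw [Function.iterate_succ_apply'] at hy
        exact ⟨y, Rstep_mono I g La ε hk hy, hyS⟩
      · exact ih hk
  obtain ⟨n, hn⟩ := hP
  exact key n hn
end

section
/- Let l, u : A × I → ℝ satisfy l(a, i) ≤ g_i(a) ≤ u(a, i) for all a ∈ A and i ∈ I. Let S ⊆ A satisfy: (closedness under the safe-set update) for every a ∈ A, if there exists a' ∈ S with l(a', i) − L_a · dist(a, a') ≥ 0 for all i ∈ I, then a ∈ S; and (converged expanders) for every a' ∈ S for which there exist a ∈ A \ S and some i ∈ I with u(a', i) − L_a · dist(a, a') ≥ 0, it holds that u(a', j) − l(a', j) < ε for all j ∈ I. Then R_ε(S) ⊆ S, and consequently R̄_ε(S) = S; that is, once local safe exploration has converged with uncertainty below ε on all expanders, the safe set contains the entire safely reachable region. -/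
/-- Once local safe exploration has converged (the safe set is closed under the
Lipschitz-based safe-set update, and all expanders have uncertainty below `ε`), the safe set
contains the entire safely reachable region: `R_ε(S) ⊆ S` and `R̄_ε(S) = S`. -/
theorem stmt12
    {A ι : Type*} [MetricSpace A]
    (I : Finset ι) (g : ι → A → ℝ)
    (La : ℝ) (hLa : 0 ≤ La) (ε : ℝ) (hε : 0 < ε)
    (l u : A → ι → ℝ)
    (hbounds : ∀ a : A, ∀ i ∈ I, l a i ≤ g i a ∧ g i a ≤ u a i)
    (S : Set A)
    (hclosed : ∀ a : A,
      (∃ a' ∈ S, ∀ i ∈ I, l a' i - La * dist a a' ≥ 0) → a ∈ S)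
    (hconv : ∀ a' ∈ S,
      (∃ a : A, a ∉ S ∧ ∃ i ∈ I, u a' i - La * dist a a' ≥ 0) →
        ∀ j ∈ I, u a' j - l a' j < ε) :
    Rstep I g La ε S ⊆ S ∧ Rbar I g La ε S = S := by
  have hstep : Rstep I g La ε S ⊆ S := by
    intro a ha
    rcases ha with ha | ⟨a', ha'S, hg⟩
    · exact ha
    by_cases haS : a ∈ S
    · exact haS
    apply hclosed a
    refine ⟨a', ha'S, fun i hi => ?_⟩
    rcases Finset.eq_empty_or_nonempty I with hI | ⟨i₀, hi₀⟩
    · exact absurd hi (by simp [hI])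
    have hgi₀ := hg i₀ hi₀
    have hu : u a' i₀ - La * dist a a' ≥ 0 := by
      have := (hbounds a' i₀ hi₀).2; linarith
    have hcv := hconv a' ha'S ⟨a, haS, i₀, hi₀, hu⟩ i hi
    have hgi := hg i hi
    have := (hbounds a' i hi).2
    linarith
  refine ⟨hstep, ?_⟩
  have hfix : ∀ n, (Rstep I g La ε)^[n] S = S := by
    intro n
    induction n with
    | zero => rfl
    | succ n ih =>
      rw [Function.iterate_succ_apply', ih]
      exact le_antisymm hstep (Set.subset_union_left)
  simp [Rbar, hfix, Set.iUnion_const]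
end
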